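/- Let f be m-strongly convex with L-Lipschitz gradient, 0 < m ≤ L, and 0 < α ≤ 2/(m+L). Then the gradient descent map T(x) = x - α∇f(x) is a contraction with Lipschitz constant max(|1-αm|, |1-αL|) ≤ 1 - αm < 1. In particular, with α = 2/(m+L) the constant is (L-m)/(L+m). -/

import Mathlib

set_option maxHeartbeats 1000000
open RealInnerProductSpace
variable {E : Type*} [NormedAddCommGroup E] [InnerProductSpace ℝ E] [CompleteSpace E]

lemma GD.inner_gradient (h : E → ℝ) (p v : E) :
    ⟪gradient h p, v⟫ = fderiv ℝ h p v := by
  rw [gradient]; exact InnerProductSpace.toDual_symm_apply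

lemma GD.hasDerivAt_line (h : E → ℝ) (hdiff : Differentiable ℝ h) (x d : E) (t : ℝ) :
    HasDerivAt (fun t : ℝ => h (x + t • d)) ⟪gradient h (x + t • d), d⟫ t := by
  have hc : HasDerivAt (fun t : ℝ => x + t • d) d t := by
    simpa using ((hasDerivAt_id t).smul_const d).const_add x
  have := (hdiff (x + t • d)).hasFDerivAt.comp_hasDerivAt t hc
  rw [GD.inner_gradient]; exact this

lemma GD.convex_first_order (h : E → ℝ) (hdiff : Differentiable ℝ h)
    (hconv : ConvexOn ℝ Set.univ h) (x y : E) :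
    h x + ⟪gradient h x, y - x⟫ ≤ h y := by
  rcases eq_or_ne y x with rfl | hne
  · simp
  · set d := y - x with hd
    have hφconv : ConvexOn ℝ Set.univ (fun t : ℝ => h (x + t • d)) := by
      have := hconv.comp_affineMap (AffineMap.lineMap x y)
      simp only [Set.preimage_univ] at this
      convert this using 2 with t
      case e'_12 => simp [AffineMap.lineMap_apply, hd]; abel
      all_goals rfl
    have hder : HasDerivAt (fun t : ℝ => h (x + t • d)) ⟪gradient h x, d⟫ 0 := by
      simpa using GD.hasDerivAt_line h hdiff x d 0
    have hs := hφconv.le_slope_of_hasDerivAt (Set.mem_univ (0:ℝ)) (Set.mem_univ (1:ℝ))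
      one_pos hder
    rw [slope_def_field] at hs
    simp only [zero_smul, add_zero, one_smul, div_one] at hs
    have h1 : x + d = y := by rw [hd]; abel
    rw [h1] at hs
    simp only [div_one, sub_zero] at hs
    linarith [hs]

lemma GD.descent (h : E → ℝ) (hdiff : Differentiable ℝ h) (K : ℝ) (hK : 0 ≤ K)
    (hlip : ∀ p q : E, ‖gradient h p - gradient h q‖ ≤ K * ‖p - q‖) (x y : E) :
    h y ≤ h x + ⟪gradient h x, y - x⟫ + K / 2 * ‖y - x‖ ^ 2 := by
  set d := y - x with hd
  set ψ : ℝ → ℝ := fun t => h (x + t • d) - t * ⟪gradient h x, d⟫ - K / 2 * t ^ 2 * ‖d‖ ^ 2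
    with hψ
  have hψder : ∀ t : ℝ, HasDerivAt ψ
      (⟪gradient h (x + t • d), d⟫ - ⟪gradient h x, d⟫ - K * t * ‖d‖ ^ 2) t := by
    intro t
    have h1 := GD.hasDerivAt_line h hdiff x d t
    have h2 : HasDerivAt (fun t : ℝ => t * ⟪gradient h x, d⟫) ⟪gradient h x, d⟫ t := by
      simpa using (hasDerivAt_id t).mul_const ⟪gradient h x, d⟫
    have h3 : HasDerivAt (fun t : ℝ => K / 2 * t ^ 2 * ‖d‖ ^ 2) (K * t * ‖d‖ ^ 2) t := by
      have := ((hasDerivAt_pow 2 t).const_mul (K/2)).mul_const (‖d‖^2)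
      convert this using 1
      case e'_9 => ring
      all_goals rfl
    exact (h1.sub h2).sub h3
  have hmono : AntitoneOn ψ (Set.Icc (0:ℝ) 1) := by
    apply antitoneOn_of_deriv_nonpos (convex_Icc 0 1)
    · exact (Differentiable.continuous fun t => (hψder t).differentiableAt).continuousOn
    · exact fun t _ => ((hψder t).differentiableAt).differentiableWithinAt
    · intro t ht
      rw [interior_Icc] at ht
      rw [(hψder t).deriv]
      have key : ⟪gradient h (x + t • d), d⟫ - ⟪gradient h x, d⟫
          ≤ K * t * ‖d‖ ^ 2 := by
        have h4 : ⟪gradient h (x + t • d) - gradient h x, d⟫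
            ≤ ‖gradient h (x + t • d) - gradient h x‖ * ‖d‖ := real_inner_le_norm _ _
        have h5 := hlip (x + t • d) x
        have h6 : ‖x + t • d - x‖ = t * ‖d‖ := by
          rw [add_sub_cancel_left, norm_smul, Real.norm_eq_abs, abs_of_nonneg ht.1.le]
        rw [h6] at h5
        have h7 : ⟪gradient h (x + t • d) - gradient h x, d⟫
            = ⟪gradient h (x + t • d), d⟫ - ⟪gradient h x, d⟫ := inner_sub_left _ _ _
        nlinarith [norm_nonneg d, norm_nonneg (gradient h (x + t • d) - gradient h x)]
      linarith
  have := hmono (Set.left_mem_Icc.2 zero_le_one) (Set.right_mem_Icc.2 zero_le_one) zero_le_one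
  have h0 : ψ 0 = h x := by simp [hψ]
  have h1 : ψ 1 = h y - ⟪gradient h x, d⟫ - K / 2 * ‖d‖ ^ 2 := by
    have hxy : x + (1:ℝ) • d = y := by rw [hd]; rw [one_smul]; abel
    simp only [hψ, hxy, one_pow, one_mul]
    ring
  rw [h0, h1] at this
  linarith

lemma GD.coco (h : E → ℝ) (hdiff : Differentiable ℝ h) (hconv : ConvexOn ℝ Set.univ h)
    (K : ℝ) (hK : 0 < K)
    (hdesc : ∀ p q : E, h q ≤ h p + ⟪gradient h p, q - p⟫ + K / 2 * ‖q - p‖ ^ 2)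
    (x y : E) :
    ‖gradient h x - gradient h y‖ ^ 2 ≤ K * ⟪gradient h x - gradient h y, x - y⟫ := by
  have star : ∀ a b : E, h a + ⟪gradient h a, b - a⟫
      + 1 / (2 * K) * ‖gradient h b - gradient h a‖ ^ 2 ≤ h b := by
    intro a b
    set u := gradient h b - gradient h a with hu
    set w := b - (1 / K) • u with hw
    have h1 := GD.convex_first_order h hdiff hconv a w
    have h2 := hdesc b w
    have e1 : w - b = -((1 / K) • u) := by rw [hw]; abel
    have e2 : ⟪gradient h b, w - b⟫ = -(1 / K) * ⟪gradient h b, u⟫ := by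
      rw [e1, inner_neg_right, real_inner_smul_right]; ring
    have e3 : ‖w - b‖ ^ 2 = (1 / K) ^ 2 * ‖u‖ ^ 2 := by
      rw [e1, norm_neg, norm_smul, Real.norm_eq_abs, mul_pow, sq_abs]
    have e4 : ⟪gradient h a, w - a⟫ = ⟪gradient h a, b - a⟫ - (1 / K) * ⟪gradient h a, u⟫ := by
      have : w - a = (b - a) - (1 / K) • u := by rw [hw]; abel
      rw [this, inner_sub_right, real_inner_smul_right]
    have e5 : ⟪gradient h b, u⟫ - ⟪gradient h a, u⟫ = ‖u‖ ^ 2 := by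
      rw [← inner_sub_left, ← hu, real_inner_self_eq_norm_sq]
    rw [e4] at h1
    rw [e2, e3] at h2
    have hK2 : (0:ℝ) < 2 * K := by linarith
    have expand : K / 2 * ((1 / K) ^ 2 * ‖u‖ ^ 2) = 1 / (2 * K) * ‖u‖ ^ 2 := by
      field_simp
    rw [expand] at h2
    have hrel : 1 / K = 2 * (1 / (2 * K)) := by field_simp
    have e5' : 1 / K * ⟪gradient h b, u⟫ - 1 / K * ⟪gradient h a, u⟫
        = 2 * (1 / (2 * K)) * ‖u‖ ^ 2 := by rw [← mul_sub, e5, hrel]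
    linarith [h1, h2, e5']
  have s1 := star x y
  have s2 := star y x
  have e7 : ⟪gradient h x - gradient h y, x - y⟫
      = -⟪gradient h x, y - x⟫ - ⟪gradient h y, x - y⟫ := by
    rw [inner_sub_left, show (x - y : E) = -(y - x) from by abel, inner_neg_right,
      inner_neg_right]
  have e8 : ‖gradient h y - gradient h x‖ = ‖gradient h x - gradient h y‖ := norm_sub_rev _ _
  rw [e8] at s1
  have hhalf : (0:ℝ) < 1 / (2 * K) := by positivity
  have key : 2 * (1 / (2 * K)) * ‖gradient h x - gradient h y‖ ^ 2
      ≤ ⟪gradient h x - gradient h y, x - y⟫ := by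
    rw [e7]; linarith [s1, s2]
  have hrel : 2 * (1 / (2 * K)) = 1 / K := by field_simp
  rw [hrel] at key
  have h9 : K * (1 / K * ‖gradient h x - gradient h y‖ ^ 2)
      = ‖gradient h x - gradient h y‖ ^ 2 := by field_simp
  linarith [mul_le_mul_of_nonneg_left key hK.le, h9]

lemma GD.hasGradientAt_normsq (m : ℝ) (p : E) :
    HasGradientAt (fun z : E => m / 2 * ‖z‖ ^ 2) (m • p) p := by
  rw [hasGradientAt_iff_hasFDerivAt]
  have h1 : HasFDerivAt (fun z : E => (inner ℝ z z : ℝ))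
      ((fderivInnerCLM ℝ (p, p)).comp ((ContinuousLinearMap.id ℝ E).prod
        (ContinuousLinearMap.id ℝ E))) p :=
    (hasFDerivAt_id p).inner ℝ (hasFDerivAt_id p)
  have h2 := h1.const_mul (m / 2)
  have heq : (fun z : E => m / 2 * (inner ℝ z z : ℝ)) = fun z : E => m / 2 * ‖z‖ ^ 2 := by
    funext z; rw [real_inner_self_eq_norm_sq]
  rw [heq] at h2
  convert h2 using 1
  case e'_9 => rfl
  ext v
  simp [fderivInnerCLM_apply, real_inner_smul_left, InnerProductSpace.toDual_apply_apply,
    real_inner_comm]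
  ring

lemma GD.gradient_h (f : E → ℝ) (hdiff : Differentiable ℝ f) (m : ℝ) (p : E) :
    gradient (fun z : E => f z - m / 2 * ‖z‖ ^ 2) p = gradient f p - m • p := by
  apply HasGradientAt.gradient
  rw [hasGradientAt_iff_hasFDerivAt]
  have h1 : HasFDerivAt f (InnerProductSpace.toDual ℝ E (gradient f p)) p :=
    ((hdiff p).hasGradientAt).hasFDerivAt
  have h2 : HasFDerivAt (fun z : E => m / 2 * ‖z‖ ^ 2)
      (InnerProductSpace.toDual ℝ E (m • p)) p := by
    rw [← hasGradientAt_iff_hasFDerivAt]; exact GD.hasGradientAt_normsq m p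
  have := h1.sub h2
  rwa [← map_sub] at this

lemma GD.diff_h (f : E → ℝ) (hdiff : Differentiable ℝ f) (m : ℝ) :
    Differentiable ℝ (fun z : E => f z - m / 2 * ‖z‖ ^ 2) := fun p =>
  (hdiff p).sub ((GD.hasGradientAt_normsq m p).differentiableAt)

/-- For `f` `m`-strongly convex with `L`-Lipschitz gradient, `0 < m ≤ L`, and
`0 < α ≤ 2/(m+L)`, the gradient descent map `T(x) = x - α∇f(x)` is a contraction
with Lipschitz constant `max(|1-αm|, |1-αL|) ≤ 1 - αm < 1`; with `α = 2/(m+L)` the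
constant is `(L-m)/(L+m)`. -/
theorem gradient_descent_contraction
    (n : ℕ) (m L : ℝ) (hm : 0 < m) (hmL : m ≤ L)
    (f : EuclideanSpace ℝ (Fin n) → ℝ) (hdiff : Differentiable ℝ f)
    (hsc : StrongConvexOn Set.univ m f)
    (hlip : ∀ x y : EuclideanSpace ℝ (Fin n),
      ‖gradient f x - gradient f y‖ ≤ L * ‖x - y‖)
    (α : ℝ) (hα0 : 0 < α) (hα : α ≤ 2 / (m + L))
    (T : EuclideanSpace ℝ (Fin n) → EuclideanSpace ℝ (Fin n))
    (hT : ∀ x, T x = x - α • gradient f x) :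
    (∀ x y, ‖T x - T y‖ ≤ max |1 - α * m| |1 - α * L| * ‖x - y‖) ∧
    max |1 - α * m| |1 - α * L| ≤ 1 - α * m ∧ 1 - α * m < 1 ∧
    (α = 2 / (m + L) → max |1 - α * m| |1 - α * L| = (L - m) / (L + m)) := by
  have hML : (0:ℝ) < m + L := by linarith
  have hαsum : α * (m + L) ≤ 2 := by
    rw [le_div_iff₀ hML] at hα; linarith
  have hαm1 : α * m ≤ 1 := by nlinarith
  have habs1 : |1 - α * m| = 1 - α * m := abs_of_nonneg (by linarith)
  have habs2 : |1 - α * L| ≤ 1 - α * m := by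
    rw [abs_le]; constructor <;> nlinarith
  have hmax : max |1 - α * m| |1 - α * L| = 1 - α * m := by
    rw [habs1]; exact max_eq_left (habs1 ▸ habs2)
  refine ⟨?_, by rw [hmax], by nlinarith, ?_⟩
  · intro x y
    rw [hmax]
    set h : EuclideanSpace ℝ (Fin n) → ℝ := fun z => f z - m / 2 * ‖z‖ ^ 2 with hh
    have hconv : ConvexOn ℝ Set.univ h := strongConvexOn_iff_convex.1 hsc
    have hdh : Differentiable ℝ h := GD.diff_h f hdiff m
    have hgh : ∀ p, gradient h p = gradient f p - m • p := GD.gradient_h f hdiff m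
    set g := gradient f x - gradient f y with hg
    set d := x - y with hd
    set u := g - m • d with huu
    have hgu : g = u + m • d := by rw [huu]; abel
    have hu_eq : gradient h x - gradient h y = u := by
      rw [hgh, hgh, huu, hg, hd, smul_sub]; abel
    have hdescf := GD.descent f hdiff L (hm.le.trans hmL) hlip
    have hdesch : ∀ ε : ℝ, 0 < ε → ∀ p q : EuclideanSpace ℝ (Fin n),
        h q ≤ h p + ⟪gradient h p, q - p⟫ + (L - m + ε) / 2 * ‖q - p‖ ^ 2 := by
      intro ε hε p q
      have h1 := hdescf p q
      have h2 : ⟪gradient h p, q - p⟫ = ⟪gradient f p, q - p⟫ - m * ⟪p, q - p⟫ := by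
        rw [hgh, inner_sub_left, real_inner_smul_left]
      have h3 : ‖q - p‖ ^ 2 = ‖q‖ ^ 2 - 2 * ⟪p, q⟫ + ‖p‖ ^ 2 := by
        rw [norm_sub_sq_real, real_inner_comm]
      have h4 : ⟪p, q - p⟫ = ⟪p, q⟫ - ‖p‖ ^ 2 := by
        rw [inner_sub_right, real_inner_self_eq_norm_sq]
      have hq : h q = f q - m / 2 * ‖q‖ ^ 2 := rfl
      have hp : h p = f p - m / 2 * ‖p‖ ^ 2 := rfl
      rw [hq, hp, h2, h3, h4]
      nlinarith [h1, h3, sq_nonneg ‖q - p‖]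
    have hud : 0 ≤ ⟪u, d⟫ := by
      have c1 := GD.convex_first_order h hdh hconv x y
      have c2 := GD.convex_first_order h hdh hconv y x
      have e7 : ⟪gradient h x - gradient h y, x - y⟫
          = -⟪gradient h x, y - x⟫ - ⟪gradient h y, x - y⟫ := by
        rw [inner_sub_left, show (x - y : EuclideanSpace ℝ (Fin n)) = -(y - x) from by abel,
          inner_neg_right, inner_neg_right]
      rw [← hd, hu_eq] at e7
      rw [e7]; linarith
    have hcoco_eps : ∀ ε : ℝ, 0 < ε → ‖u‖ ^ 2 ≤ (L - m + ε) * ⟪u, d⟫ := by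
      intro ε hε
      have hK : 0 < L - m + ε := by linarith
      have := GD.coco h hdh hconv (L - m + ε) hK (hdesch ε hε) x y
      rwa [hu_eq, ← hd] at this
    have hcoco : ‖u‖ ^ 2 ≤ (L - m) * ⟪u, d⟫ := by
      rcases lt_or_eq_of_le hud with hpos | hzero
      · apply le_of_forall_pos_le_add
        intro ε hε
        have h5 := hcoco_eps (ε / ⟪u, d⟫) (div_pos hε hpos)
        have hne : ⟪u, d⟫ ≠ 0 := ne_of_gt hpos
        have heq : (L - m + ε / ⟪u, d⟫) * ⟪u, d⟫ = (L - m) * ⟪u, d⟫ + ε := by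
          rw [add_mul, div_mul_cancel₀ _ hne]
        rw [heq] at h5
        exact h5
      · have h0 := hcoco_eps 1 one_pos
        rw [← hzero, mul_zero] at h0 ⊢
        simpa using h0
    have hTd : T x - T y = d - α • g := by
      rw [hT, hT, hg, hd, smul_sub]; abel
    have hnorm : ‖T x - T y‖ ^ 2 = ‖d‖ ^ 2 - 2 * α * ⟪u, d⟫ - 2 * α * m * ‖d‖ ^ 2
        + α ^ 2 * (‖u‖ ^ 2 + 2 * m * ⟪u, d⟫ + m ^ 2 * ‖d‖ ^ 2) := by
      rw [hTd, norm_sub_sq_real, real_inner_smul_right, norm_smul, Real.norm_eq_abs,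
        mul_pow, sq_abs]
      have hgd : ⟪d, g⟫ = ⟪u, d⟫ + m * ‖d‖ ^ 2 := by
        rw [real_inner_comm, hgu, inner_add_left, real_inner_smul_left,
          real_inner_self_eq_norm_sq]
      have hgsq : ‖g‖ ^ 2 = ‖u‖ ^ 2 + 2 * m * ⟪u, d⟫ + m ^ 2 * ‖d‖ ^ 2 := by
        rw [hgu, norm_add_sq_real, real_inner_smul_right, norm_smul, Real.norm_eq_abs,
          mul_pow, sq_abs]
        ring
      rw [hgd, hgsq]; ring
    have hint1 : α ^ 2 * ‖u‖ ^ 2 ≤ α ^ 2 * ((L - m) * ⟪u, d⟫) :=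
      mul_le_mul_of_nonneg_left hcoco (sq_nonneg α)
    have hint2 : 0 ≤ α * (2 - α * (m + L)) * ⟪u, d⟫ :=
      mul_nonneg (mul_nonneg hα0.le (by linarith)) hud
    have hsq : ‖T x - T y‖ ^ 2 ≤ ((1 - α * m) * ‖d‖) ^ 2 := by
      nlinarith [hnorm, hint1, hint2]
    have hrhs : 0 ≤ (1 - α * m) * ‖d‖ := mul_nonneg (by linarith) (norm_nonneg d)
    calc ‖T x - T y‖ ≤ (1 - α * m) * ‖d‖ := le_of_pow_le_pow_left₀ two_ne_zero hrhs hsq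
      _ = (1 - α * m) * ‖x - y‖ := by rw [hd]
  · intro hα2
    rw [hmax, hα2, eq_div_iff (by linarith : (L:ℝ) + m ≠ 0)]
    field_simp
    ring
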